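/- arXiv:1304.4040 — 3 statements merged into one kernel-verified Lean document; each statement's English description precedes it below -/
import Mathlib

section
/- Let Ω be a bounded open domain in ℝ^N with smooth boundary, T > 0, 1 < p ≤ 2, and let M : [0,T]×Ω → ℝ satisfy 0 < a ≤ M(t,x) ≤ b < ∞. Suppose C > 0 is a T-independent constant such that every solution w of ∂_t w + ((a+b)/2) Δ_x w = g on [0,T]×Ω with w(T,·) = 0 and homogeneous Neumann boundary condition satisfies ‖Δ_x w‖_{L^p([0,T]×Ω)} ≤ C ‖g‖_{L^p([0,T]×Ω)}, and assume C·(b−a)/2 < 1. Then any (sufficiently regular) solution v of ∂_t v + M Δ_x v = f on [0,T]×Ω with v(T,·) = 0 and homogeneous Neumann boundary condition satisfies ‖Δ_x v‖_{L^p([0,T]×Ω)} ≤ D·‖f‖_{L^p([0,T]×Ω)}, where D = C/(1 − C·(b−a)/2). -/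
/-!
Freeze the coefficient at the midpoint `κ = (a+b)/2`: `v` then solves the backward heat
equation `∂ₜv + κΔv = g` with source `g = f + (κ - M)Δv`, and `|κ - M| ≤ (b-a)/2`.
Maximal regularity gives `‖Δv‖ ≤ C (‖f‖ + (b-a)/2 ‖Δv‖)`, and since `‖Δv‖` is finite
(`Δv` is continuous up to the compact closure of the cylinder) the last term can be
absorbed into the left-hand side when `C (b-a)/2 < 1`.
-/

open MeasureTheory Real Set Function
open scoped ENNReal

noncomputable section

/-- The Laplacian of `f : ℝ^N → ℝ`, computed as the sum of the second partial
derivatives in the coordinate directions. -/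
def lapl {N : ℕ} (f : EuclideanSpace ℝ (Fin N) → ℝ) (x : EuclideanSpace ℝ (Fin N)) : ℝ :=
  ∑ i : Fin N, fderiv ℝ (fun y => fderiv ℝ f y (EuclideanSpace.single i 1)) x
    (EuclideanSpace.single i 1)

/-- The time derivative of `u : ℝ → ℝ^N → ℝ`. -/
def tderiv {N : ℕ} (u : ℝ → EuclideanSpace ℝ (Fin N) → ℝ) (t : ℝ)
    (x : EuclideanSpace ℝ (Fin N)) : ℝ :=
  deriv (fun s => u s x) t

/-- The natural (product Lebesgue) measure on the parabolic cylinder `[0,T] × Ω`. -/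
def cylMeasure {N : ℕ} (T : ℝ) (Ω : Set (EuclideanSpace ℝ (Fin N))) :
    Measure (ℝ × EuclideanSpace ℝ (Fin N)) :=
  (volume.restrict (Icc 0 T)).prod (volume.restrict Ω)

section PartialDerivatives

variable {E F : Type*} [NormedAddCommGroup E] [NormedSpace ℝ E]
  [NormedAddCommGroup F] [NormedSpace ℝ F]

theorem fderiv_comp_prodMk_right_apply {u : ℝ × E → F} (hu : Differentiable ℝ u)
    (t : ℝ) (y e : E) :
    fderiv ℝ (fun x => u (t, x)) y e = fderiv ℝ u (t, y) (0, e) := by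
  have hcomp := (hu (t, y)).hasFDerivAt.comp y (hasFDerivAt_prodMk_right t y)
  rw [show (fun x => u (t, x)) = u ∘ Prod.mk t from rfl, hcomp.fderiv]
  simp

theorem deriv_comp_prodMk_left {u : ℝ × E → F} (hu : Differentiable ℝ u) (t : ℝ) (x : E) :
    deriv (fun s => u (s, x)) t = fderiv ℝ u (t, x) (1, 0) := by
  have hcomp := (hu (t, x)).hasFDerivAt.comp t (hasFDerivAt_prodMk_left (𝕜 := ℝ) t x)
  rw [← fderiv_apply_one_eq_deriv, show (fun s => u (s, x)) = u ∘ (·, x) from rfl,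
    hcomp.fderiv]
  simp

end PartialDerivatives

section Regularity

variable {N : ℕ} {v : ℝ → EuclideanSpace ℝ (Fin N) → ℝ}

theorem lapl_eq_sum_fderiv_fderiv_uncurry (hv : ContDiff ℝ 2 (uncurry v))
    (t : ℝ) (x : EuclideanSpace ℝ (Fin N)) :
    lapl (v t) x = ∑ i : Fin N,
      fderiv ℝ (fun z => fderiv ℝ (uncurry v) z (0, EuclideanSpace.single i 1)) (t, x)
        (0, EuclideanSpace.single i 1) := by
  have hdiff : ∀ e, Differentiable ℝ (fun z => fderiv ℝ (uncurry v) z (0, e)) := fun e =>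
    ((hv.fderiv_right (m := 1) le_rfl).clm_apply contDiff_const).differentiable one_ne_zero
  refine Finset.sum_congr rfl fun i _ => ?_
  simp_rw [← fderiv_comp_prodMk_right_apply (hdiff _),
    ← fderiv_comp_prodMk_right_apply (hv.differentiable two_ne_zero)]
  rfl

theorem continuous_lapl_of_contDiff (hv : ContDiff ℝ 2 (uncurry v)) :
    Continuous fun z : ℝ × EuclideanSpace ℝ (Fin N) => lapl (v z.1) z.2 := by
  simp_rw [lapl_eq_sum_fderiv_fderiv_uncurry hv]
  refine continuous_finsetSum _ fun i _ => ?_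
  have hpartial : ContDiff ℝ 1
      (fun z => fderiv ℝ (uncurry v) z (0, EuclideanSpace.single i 1)) :=
    (hv.fderiv_right le_rfl).clm_apply contDiff_const
  exact (hpartial.continuous_fderiv one_ne_zero).clm_apply continuous_const

theorem continuous_tderiv_of_contDiff (hv : ContDiff ℝ 2 (uncurry v)) :
    Continuous fun z : ℝ × EuclideanSpace ℝ (Fin N) => tderiv v z.1 z.2 := by
  simp_rw [tderiv, ← uncurry_apply_pair v,
    deriv_comp_prodMk_left (hv.differentiable two_ne_zero)]
  exact (hv.continuous_fderiv two_ne_zero).clm_apply continuous_const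

end Regularity

theorem ENNReal.le_ofReal_div_mul_of_le_mul_add {A F : ℝ≥0∞} {C k : ℝ} (hA : A ≠ ∞)
    (hC : 0 < C) (hk : 0 ≤ k) (hCk : C * k < 1)
    (h : A ≤ ENNReal.ofReal C * (F + ENNReal.ofReal k * A)) :
    A ≤ ENNReal.ofReal (C / (1 - C * k)) * F := by
  have hD : 0 < C / (1 - C * k) := div_pos hC (by linarith)
  rcases eq_or_ne F ∞ with rfl | hF
  · simp [ENNReal.mul_top (ENNReal.ofReal_pos.2 hD).ne']
  have hrhs : ENNReal.ofReal C * (F + ENNReal.ofReal k * A) ≠ ∞ := by finiteness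
  have hreal : A.toReal ≤ C * (F.toReal + k * A.toReal) := by
    have := ENNReal.toReal_mono hrhs h
    rwa [ENNReal.toReal_mul, ENNReal.toReal_add hF (by finiteness), ENNReal.toReal_mul,
      ENNReal.toReal_ofReal hC.le, ENNReal.toReal_ofReal hk] at this
  calc A = ENNReal.ofReal A.toReal := (ENNReal.ofReal_toReal hA).symm
    _ ≤ ENNReal.ofReal (C / (1 - C * k) * F.toReal) := by
        refine ENNReal.ofReal_le_ofReal ?_
        rw [div_mul_eq_mul_div, le_div_iff₀ (by linarith)]
        nlinarith
    _ = ENNReal.ofReal (C / (1 - C * k)) * F := by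
        rw [ENNReal.ofReal_mul hD.le, ENNReal.ofReal_toReal hF]

theorem abs_add_midpoint_mul_le {τ m a b L f : ℝ} (ham : a ≤ m) (hmb : m ≤ b)
    (h : τ + m * L = f) : |τ + (a + b) / 2 * L| ≤ |f| + |(b - a) / 2 * L| := by
  have hmid : |(a + b) / 2 - m| ≤ (b - a) / 2 := abs_le.2 ⟨by linarith, by linarith⟩
  calc |τ + (a + b) / 2 * L| = |f + ((a + b) / 2 - m) * L| := by rw [← h]; congr 1; ring
    _ ≤ |f| + |(b - a) / 2 * L| := by
        grw [abs_add_le, abs_mul, abs_mul, hmid, abs_of_nonneg ((abs_nonneg _).trans hmid)]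

section LpBounds

variable {α : Type*} [MeasurableSpace α] {μ : Measure α} {p : ℝ≥0∞}

/-- Here `f` need not be measurable (the source term of the PDE is not assumed to be), so
Minkowski is applied to its measurable minorant `max (|g| - |u|) 0` instead. -/
theorem eLpNorm_le_add_of_abs_le_add_abs {f g u : α → ℝ} (hg : AEStronglyMeasurable g μ)
    (hu : AEStronglyMeasurable u μ) (hp : 1 ≤ p)
    (hgfu : ∀ᵐ x ∂μ, |g x| ≤ |f x| + |u x|) :
    eLpNorm g p μ ≤ eLpNorm f p μ + eLpNorm u p μ := by
  set h : α → ℝ := fun x => max (|g x| - |u x|) 0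
  have hh : AEStronglyMeasurable h μ :=
    (hg.norm.sub hu.norm).sup aestronglyMeasurable_const
  calc eLpNorm g p μ ≤ eLpNorm (fun x => h x + |u x|) p μ := by
        refine eLpNorm_mono fun x => ?_
        have hx : |g x| ≤ h x + |u x| := by linarith [le_max_left (|g x| - |u x|) 0]
        rwa [Real.norm_eq_abs, Real.norm_eq_abs, abs_of_nonneg ((abs_nonneg _).trans hx)]
    _ ≤ eLpNorm h p μ + eLpNorm (fun x => |u x|) p μ := eLpNorm_add_le hh hu.norm hp
    _ ≤ eLpNorm f p μ + eLpNorm u p μ := by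
        gcongr
        · refine eLpNorm_mono_ae ?_
          filter_upwards [hgfu] with x hx
          rw [Real.norm_eq_abs, Real.norm_eq_abs, abs_of_nonneg (le_max_right _ _)]
          exact max_le (by linarith) (abs_nonneg _)
        · exact (eLpNorm_norm u).le

theorem Continuous.eLpNorm_lt_top_of_ae_mem [TopologicalSpace α] [OpensMeasurableSpace α]
    [IsFiniteMeasure μ] {E : Type*} [NormedAddCommGroup E] [SecondCountableTopology E]
    {f : α → E} (hf : Continuous f) {K : Set α} (hK : IsCompact K) (hμK : ∀ᵐ x ∂μ, x ∈ K) :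
    eLpNorm f p μ < ∞ := by
  obtain ⟨R, hR⟩ := hK.exists_bound_of_continuousOn hf.continuousOn
  exact (MemLp.of_bound hf.aestronglyMeasurable R (hμK.mono hR)).eLpNorm_lt_top

end LpBounds

section Cylinder

variable {N : ℕ} {T : ℝ} {Ω : Set (EuclideanSpace ℝ (Fin N))}

theorem isFiniteMeasure_cylMeasure (hΩ : Bornology.IsBounded Ω) :
    IsFiniteMeasure (cylMeasure T Ω) := by
  have : IsFiniteMeasure (volume.restrict (Icc 0 T)) :=
    ⟨by simp⟩
  have : IsFiniteMeasure (volume.restrict Ω) := ⟨by simp [hΩ.measure_lt_top]⟩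
  unfold cylMeasure
  infer_instance

theorem ae_mem_cylinder (hΩ : MeasurableSet Ω) : ∀ᵐ z ∂cylMeasure T Ω, z ∈ Icc 0 T ×ˢ Ω := by
  rw [cylMeasure, Measure.prod_restrict]
  exact ae_restrict_mem (measurableSet_Icc.prod hΩ)

end Cylinder

theorem stmt_2_general
    (N : ℕ) (Ω : Set (EuclideanSpace ℝ (Fin N))) (φ : EuclideanSpace ℝ (Fin N) → ℝ)
    (hΩopen : IsOpen Ω) (hΩbdd : Bornology.IsBounded Ω)
    (T : ℝ) (hT : 0 < T)
    (p : ℝ) (hp1 : 1 < p)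
    (M : ℝ → EuclideanSpace ℝ (Fin N) → ℝ)
    (a b : ℝ) (hab : a ≤ b)
    (hM : ∀ t ∈ Icc (0 : ℝ) T, ∀ x ∈ Ω, a ≤ M t x ∧ M t x ≤ b)
    (C : ℝ) (hC : 0 < C)
    -- `C` is a T-independent `L^p` maximal regularity constant for the backward heat
    -- equation with diffusivity `(a+b)/2` and Neumann boundary conditions:
    (hmaxreg : ∀ T' > (0 : ℝ), ∀ w g : ℝ → EuclideanSpace ℝ (Fin N) → ℝ,
      ContDiff ℝ 2 (uncurry w) →
      (∀ t ∈ Icc (0 : ℝ) T', ∀ x ∈ Ω,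
        tderiv w t x + ((a + b) / 2) * lapl (w t) x = g t x) →
      (∀ x ∈ Ω, w T' x = 0) →
      (∀ t ∈ Icc (0 : ℝ) T', ∀ x ∈ frontier Ω, fderiv ℝ (w t) x (gradient φ x) = 0) →
      eLpNorm (fun z : ℝ × EuclideanSpace ℝ (Fin N) => lapl (w z.1) z.2)
          (ENNReal.ofReal p) (cylMeasure T' Ω)
        ≤ ENNReal.ofReal C *
          eLpNorm (fun z : ℝ × EuclideanSpace ℝ (Fin N) => g z.1 z.2)
            (ENNReal.ofReal p) (cylMeasure T' Ω))
    (hsmall : C * ((b - a) / 2) < 1)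
    (v f : ℝ → EuclideanSpace ℝ (Fin N) → ℝ)
    -- sufficient regularity of the solution
    (hreg : ContDiff ℝ 2 (uncurry v))
    -- the equation `∂ₜ v + M Δ v = f` on `[0,T] × Ω`
    (hpde : ∀ t ∈ Icc (0 : ℝ) T, ∀ x ∈ Ω,
      tderiv v t x + M t x * lapl (v t) x = f t x)
    -- final condition `v(T,·) = 0`
    (hfinal : ∀ x ∈ Ω, v T x = 0)
    -- homogeneous Neumann boundary condition
    (hbc : ∀ t ∈ Icc (0 : ℝ) T, ∀ x ∈ frontier Ω, fderiv ℝ (v t) x (gradient φ x) = 0) :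
    eLpNorm (fun z : ℝ × EuclideanSpace ℝ (Fin N) => lapl (v z.1) z.2)
        (ENNReal.ofReal p) (cylMeasure T Ω)
      ≤ ENNReal.ofReal (C / (1 - C * ((b - a) / 2))) *
        eLpNorm (fun z : ℝ × EuclideanSpace ℝ (Fin N) => f z.1 z.2)
          (ENNReal.ofReal p) (cylMeasure T Ω) := by
  have := isFiniteMeasure_cylMeasure (T := T) hΩbdd
  have hk : 0 ≤ (b - a) / 2 := by linarith
  have hΔ := continuous_lapl_of_contDiff hreg
  have hcyl := ae_mem_cylinder (T := T) hΩopen.measurableSet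
  have hΔfin := hΔ.eLpNorm_lt_top_of_ae_mem (p := ENNReal.ofReal p)
    (isCompact_Icc.prod hΩbdd.isCompact_closure)
    (hcyl.mono fun z hz => ⟨hz.1, subset_closure hz.2⟩)
  have hfrozen := hmaxreg T hT v (fun t x => tderiv v t x + (a + b) / 2 * lapl (v t) x) hreg
    (fun _ _ _ _ => rfl) hfinal hbc
  have hsource := eLpNorm_le_add_of_abs_le_add_abs (μ := cylMeasure T Ω)
    (g := fun z => tderiv v z.1 z.2 + (a + b) / 2 * lapl (v z.1) z.2)
    (u := fun z => (b - a) / 2 * lapl (v z.1) z.2)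
    ((continuous_tderiv_of_contDiff hreg).add (continuous_const.mul hΔ)).aestronglyMeasurable
    (continuous_const.mul hΔ).aestronglyMeasurable (ENNReal.one_le_ofReal.2 hp1.le)
    (hcyl.mono fun z hz => abs_add_midpoint_mul_le (f := f z.1 z.2) (hM _ hz.1 _ hz.2).1
      (hM _ hz.1 _ hz.2).2 (hpde _ hz.1 _ hz.2))
  refine ENNReal.le_ofReal_div_mul_of_le_mul_add hΔfin.ne hC hk hsmall (hfrozen.trans ?_)
  grw [hsource, ← Real.enorm_eq_ofReal hk, ← eLpNorm_const_smul]
  rfl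

/-- Lemma 2.3, first estimate.  On a bounded smooth domain
`Ω ⊂ ℝ^N` (encoded as a strict sublevel set of a `C²` function `φ` with nonvanishing
gradient on the boundary), for `1 < p ≤ 2` and `0 < a ≤ M(t,x) ≤ b`, if `C > 0` is a
T-independent `L^p` maximal regularity constant for the backward heat equation with
diffusivity `(a+b)/2` and Neumann boundary conditions and `C (b-a)/2 < 1`, then any
sufficiently regular solution `v` of `∂ₜ v + M Δ v = f` on `[0,T] × Ω` with
`v(T,·) = 0` and Neumann boundary conditions satisfies
`‖Δv‖_{L^p(Ω_T)} ≤ D ‖f‖_{L^p(Ω_T)}` with `D = C/(1 - C (b-a)/2)`. -/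
theorem stmt_2
    (N : ℕ) (Ω : Set (EuclideanSpace ℝ (Fin N))) (φ : EuclideanSpace ℝ (Fin N) → ℝ)
    (hΩopen : IsOpen Ω) (hΩbdd : Bornology.IsBounded Ω) (hΩne : Ω.Nonempty)
    (hφ : ContDiff ℝ 2 φ) (hΩφ : Ω = {x | φ x < 0})
    (hφgrad : ∀ x ∈ frontier Ω, gradient φ x ≠ 0)
    (T : ℝ) (hT : 0 < T)
    (p : ℝ) (hp1 : 1 < p) (hp2 : p ≤ 2)
    (M : ℝ → EuclideanSpace ℝ (Fin N) → ℝ)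
    (a b : ℝ) (ha : 0 < a) (hab : a ≤ b)
    (hM : ∀ t ∈ Icc (0 : ℝ) T, ∀ x ∈ Ω, a ≤ M t x ∧ M t x ≤ b)
    (C : ℝ) (hC : 0 < C)
    -- `C` is a T-independent `L^p` maximal regularity constant for the backward heat
    -- equation with diffusivity `(a+b)/2` and Neumann boundary conditions:
    (hmaxreg : ∀ T' > (0 : ℝ), ∀ w g : ℝ → EuclideanSpace ℝ (Fin N) → ℝ,
      ContDiff ℝ 2 (uncurry w) →
      (∀ t ∈ Icc (0 : ℝ) T', ∀ x ∈ Ω,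
        tderiv w t x + ((a + b) / 2) * lapl (w t) x = g t x) →
      (∀ x ∈ Ω, w T' x = 0) →
      (∀ t ∈ Icc (0 : ℝ) T', ∀ x ∈ frontier Ω, fderiv ℝ (w t) x (gradient φ x) = 0) →
      eLpNorm (fun z : ℝ × EuclideanSpace ℝ (Fin N) => lapl (w z.1) z.2)
          (ENNReal.ofReal p) (cylMeasure T' Ω)
        ≤ ENNReal.ofReal C *
          eLpNorm (fun z : ℝ × EuclideanSpace ℝ (Fin N) => g z.1 z.2)
            (ENNReal.ofReal p) (cylMeasure T' Ω))
    (hsmall : C * ((b - a) / 2) < 1)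
    (v f : ℝ → EuclideanSpace ℝ (Fin N) → ℝ)
    -- sufficient regularity of the solution
    (hreg : ContDiff ℝ 2 (uncurry v))
    -- the equation `∂ₜ v + M Δ v = f` on `[0,T] × Ω`
    (hpde : ∀ t ∈ Icc (0 : ℝ) T, ∀ x ∈ Ω,
      tderiv v t x + M t x * lapl (v t) x = f t x)
    -- final condition `v(T,·) = 0`
    (hfinal : ∀ x ∈ Ω, v T x = 0)
    -- homogeneous Neumann boundary condition
    (hbc : ∀ t ∈ Icc (0 : ℝ) T, ∀ x ∈ frontier Ω, fderiv ℝ (v t) x (gradient φ x) = 0) :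
    eLpNorm (fun z : ℝ × EuclideanSpace ℝ (Fin N) => lapl (v z.1) z.2)
        (ENNReal.ofReal p) (cylMeasure T Ω)
      ≤ ENNReal.ofReal (C / (1 - C * ((b - a) / 2))) *
        eLpNorm (fun z : ℝ × EuclideanSpace ℝ (Fin N) => f z.1 z.2)
          (ENNReal.ofReal p) (cylMeasure T Ω) :=
  stmt_2_general N Ω φ hΩopen hΩbdd T hT p hp1 M a b hab hM C hC hmaxreg hsmall v f hreg hpde hfinal
    hbc
end
end

section
/- Let N ≥ 1, Q ≥ 3 be an integer, and let (z_k) be the real sequence defined by some z₀ > (1 + N/2)(Q − 1) and the recursion z_{k+1} = z_k/(Q − (2/(N+2))·z_k), as long as z_k < Q(1 + N/2). Then the sequence is strictly increasing ((1 + N/2)(Q−1) < z_k < z_{k+1} for every k with z_k < Q(1+N/2))), and there exists a finite index K such that z_K ≥ Q(1 + N/2). -/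
/-!
Write `c = 1 + N/2`, so that `2/(N+2) = 1/c` and the iteration is `z ↦ z / d(z)` with
`d(z) = Q - z/c`. On the window `c(Q-1) < z < Qc` the denominator satisfies `0 < d(z) < 1`,
so each step increases `z` and the window's lower bound propagates. Since `d` decreases
in `z`, along an increasing sequence every step multiplies by at least `1/d(z₀) > 1`;
geometric growth then forces the sequence out of the window.
-/

open Filter

section BootstrapIteration

variable {c Q : ℝ}

theorem lt_div_sub_div_self (hc : 0 < c) (hQ : 1 ≤ Q) {x : ℝ}
    (hlow : c * (Q - 1) < x) (hup : x < Q * c) : x < x / (Q - x / c) := by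
  have hx : 0 < x := lt_of_le_of_lt (mul_nonneg hc.le (sub_nonneg.2 hQ)) hlow
  have hd_pos : 0 < Q - x / c := by rwa [sub_pos, div_lt_iff₀ hc]
  have hd_lt_one : Q - x / c < 1 := by rwa [sub_lt_comm, lt_div_iff₀ hc, mul_comm]
  exact (lt_div_iff₀ hd_pos).2 (mul_lt_of_lt_one_right hx hd_lt_one)

variable {z : ℕ → ℝ} (hc : 0 < c) (hQ : 1 ≤ Q) (hz0 : c * (Q - 1) < z 0)
  (hrec : ∀ k, z k < Q * c → z (k + 1) = z k / (Q - z k / c))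
include hc hQ hz0 hrec

theorem lower_bound_and_lt_succ_of_forall_le_lt (k : ℕ) (hk : ∀ j ≤ k, z j < Q * c) :
    c * (Q - 1) < z k ∧ z k < z (k + 1) := by
  have hlow : c * (Q - 1) < z k := by
    induction k with
    | zero => exact hz0
    | succ n ih =>
      have hn : c * (Q - 1) < z n := ih fun j hj => hk j (hj.trans n.le_succ)
      rw [hrec n (hk n n.le_succ)]
      exact hn.trans (lt_div_sub_div_self hc hQ hn (hk n n.le_succ))
  refine ⟨hlow, ?_⟩
  rw [hrec k (hk k le_rfl)]
  exact lt_div_sub_div_self hc hQ hlow (hk k le_rfl)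

theorem exists_le_of_bootstrap : ∃ K, Q * c ≤ z K := by
  by_contra! hstay
  have hinv k := lower_bound_and_lt_succ_of_forall_le_lt hc hQ hz0 hrec k fun j _ => hstay j
  have hz0_pos : 0 < z 0 := lt_of_le_of_lt (mul_nonneg hc.le (sub_nonneg.2 hQ)) hz0
  have hmono : Monotone z := monotone_nat_of_le_succ fun k => (hinv k).2.le
  have hd_pos k : 0 < Q - z k / c := by rw [sub_pos, div_lt_iff₀ hc]; exact hstay k
  have hd0_lt_one : Q - z 0 / c < 1 := by rwa [sub_lt_comm, lt_div_iff₀ hc, mul_comm]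
  have hd_le k : Q - z k / c ≤ Q - z 0 / c := by
    gcongr
    exact hmono k.zero_le
  have hgrowth k : (Q - z 0 / c)⁻¹ * z k ≤ z (k + 1) := by
    rw [hrec k (hstay k), inv_mul_eq_div]
    exact div_le_div_of_nonneg_left (hz0_pos.trans_le (hmono k.zero_le)).le (hd_pos k) (hd_le k)
  obtain ⟨K, hK⟩ := ((tendsto_atTop_of_geom_le hz0_pos
    ((one_lt_inv₀ (hd_pos 0)).2 hd0_lt_one) hgrowth).eventually_ge_atTop (Q * c)).exists
  exact (hstay K).not_ge hK

end BootstrapIteration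

theorem stmt_15_general (N Q : ℕ) (hQ : 3 ≤ Q) (z : ℕ → ℝ)
    (hz0 : (1 + (N : ℝ) / 2) * ((Q : ℝ) - 1) < z 0)
    (hrec : ∀ k : ℕ, z k < (Q : ℝ) * (1 + (N : ℝ) / 2) →
      z (k + 1) = z k / ((Q : ℝ) - (2 / ((N : ℝ) + 2)) * z k)) :
    (∀ k : ℕ, (∀ j ≤ k, z j < (Q : ℝ) * (1 + (N : ℝ) / 2)) →
      (1 + (N : ℝ) / 2) * ((Q : ℝ) - 1) < z k ∧ z k < z (k + 1)) ∧
    ∃ K : ℕ, (Q : ℝ) * (1 + (N : ℝ) / 2) ≤ z K := by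
  have hc : (0 : ℝ) < 1 + N / 2 := by positivity
  have hQ1 : (1 : ℝ) ≤ Q := by exact_mod_cast (by omega : 1 ≤ Q)
  have hcoeff (x : ℝ) : 2 / ((N : ℝ) + 2) * x = x / (1 + N / 2) := by
    field_simp
    ring
  simp only [hcoeff] at hrec
  exact ⟨lower_bound_and_lt_succ_of_forall_le_lt hc hQ1 hz0 hrec,
    exists_le_of_bootstrap hc hQ1 hz0 hrec⟩

/-- bootstrap-exponent iteration for a nonlinearity of degree
`Q ≥ 3` in dimension `N`.  Let `z : ℕ → ℝ` satisfy `z 0 > (1 + N/2)(Q - 1)` and the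
recursion `z_{k+1} = z_k / (Q - (2/(N+2)) z_k)` as long as `z_k < Q (1 + N/2)`.
Then, as long as the recursion is active, the sequence stays above
`(1 + N/2)(Q - 1)` and is strictly increasing, and some finite index `K` reaches
`z_K ≥ Q (1 + N/2)`. -/
theorem stmt_15 (N Q : ℕ) (hN : 1 ≤ N) (hQ : 3 ≤ Q) (z : ℕ → ℝ)
    (hz0 : (1 + (N : ℝ) / 2) * ((Q : ℝ) - 1) < z 0)
    (hrec : ∀ k : ℕ, z k < (Q : ℝ) * (1 + (N : ℝ) / 2) →
      z (k + 1) = z k / ((Q : ℝ) - (2 / ((N : ℝ) + 2)) * z k)) :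
    (∀ k : ℕ, (∀ j ≤ k, z j < (Q : ℝ) * (1 + (N : ℝ) / 2)) →
      (1 + (N : ℝ) / 2) * ((Q : ℝ) - 1) < z k ∧ z k < z (k + 1)) ∧
    ∃ K : ℕ, (Q : ℝ) * (1 + (N : ℝ) / 2) ≤ z K :=
  stmt_15_general N Q hQ z hz0 hrec
end

section
/- Let N ≥ 1 and define the sequence (q_n) by a given q₀ with (N+2)/2 < q₀ < N+2 and the recursion q_{n+1} = (1/2)·q_n(N+2)/(N+2−q_n), valid as long as q_n < N+2. Then: (i) whenever (N+2)/2 < q_n < N+2, one has q_{n+1} > q_n; (ii) the ratios q_{n+1}/q_n are strictly increasing in n; and (iii) there exists a finite index n with q_n ≥ N+2. -/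
/-!
Writing the step as `x ↦ x · ρ(x)` with `ρ(x) = A / (2 (A - x))`, the ratio `ρ` exceeds `1`
exactly on `(A/2, A)` and is strictly increasing on `(-∞, A)`. Hence the exponents increase,
so the ratios increase, and while the recursion stays active the exponents grow at least
geometrically with ratio `ρ(q₀) > 1`; they cannot stay below `A` forever.
-/

open Set

/-- The exponent reached from `L^x` in one bootstrap step, with `A = N + 2` the parabolic
dimension. -/
noncomputable def bootstrapExp (A x : ℝ) : ℝ := 1 / 2 * (x * A / (A - x))

section Ratio

variable {A x : ℝ}

lemma bootstrapExp_eq_mul (A x : ℝ) : bootstrapExp A x = x * (A / (2 * (A - x))) := by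
  simp only [bootstrapExp, div_eq_mul_inv, mul_inv]
  ring

lemma one_lt_div_two_mul_sub (hx : A / 2 < x) (hxA : x < A) : 1 < A / (2 * (A - x)) := by
  rw [one_lt_div (by linarith)]
  linarith

lemma strictMonoOn_div_two_mul_sub (hA : 0 < A) :
    StrictMonoOn (fun x => A / (2 * (A - x))) (Iio A) := by
  intro x hx y hy hxy
  simp only [mem_Iio] at hx hy
  exact div_lt_div_of_pos_left hA (by linarith) (by linarith)

lemma lt_bootstrapExp (hx : A / 2 < x) (hxA : x < A) : x < bootstrapExp A x := by
  have hx0 : 0 < x := by linarith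
  rw [bootstrapExp_eq_mul]
  exact lt_mul_of_one_lt_right hx0 (one_lt_div_two_mul_sub hx hxA)

end Ratio

section Sequence

variable {A : ℝ} {q : ℕ → ℝ}
  (hrec : ∀ n, q n < A → q (n + 1) = bootstrapExp A (q n))
include hrec

lemma half_lt_of_forall_lt (h0 : A / 2 < q 0) :
    ∀ n, (∀ k < n, q k < A) → A / 2 < q n
  | 0, _ => h0
  | n + 1, h => by
    have hn : q n < A := h n n.lt_succ_self
    have ih := half_lt_of_forall_lt h0 n fun k hk => h k (hk.trans n.lt_succ_self)
    rw [hrec n hn]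
    exact ih.trans (lt_bootstrapExp ih hn)

lemma succ_div_eq (n : ℕ) (hn : q n < A) (hq : q n ≠ 0) :
    q (n + 1) / q n = A / (2 * (A - q n)) := by
  rw [hrec n hn, bootstrapExp_eq_mul, mul_div_cancel_left₀ _ hq]

lemma strictMono_of_forall_lt (h0 : A / 2 < q 0) (hlt : ∀ n, q n < A) : StrictMono q :=
  strictMono_nat_of_lt_succ fun n => by
    have hn := half_lt_of_forall_lt hrec h0 n fun k _ => hlt k
    rw [hrec n (hlt n)]
    exact lt_bootstrapExp hn (hlt n)

lemma geometric_le_of_forall_lt (h0 : A / 2 < q 0) (hlt : ∀ n, q n < A) (n : ℕ) :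
    q 0 * (A / (2 * (A - q 0))) ^ n ≤ q n := by
  have hA : 0 < A := by linarith [hlt 0]
  have hmono := strictMono_of_forall_lt hrec h0 hlt
  induction n with
  | zero => simp
  | succ n ih =>
    have hq0 : 0 < q 0 := by linarith
    have hqn : 0 < q n := hq0.trans_le (hmono.monotone n.zero_le)
    have hρ : A / (2 * (A - q 0)) ≤ A / (2 * (A - q n)) :=
      (strictMonoOn_div_two_mul_sub hA).monotoneOn (hlt 0) (hlt n) (hmono.monotone n.zero_le)
    calc q 0 * (A / (2 * (A - q 0))) ^ (n + 1)
        = q 0 * (A / (2 * (A - q 0))) ^ n * (A / (2 * (A - q 0))) := by ring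
      _ ≤ q n * (A / (2 * (A - q n))) := by
        gcongr
        exact (one_lt_div_two_mul_sub h0 (hlt 0)).le.trans' zero_le_one
      _ = q (n + 1) := by rw [hrec n (hlt n), bootstrapExp_eq_mul]

lemma exists_le_of_half_lt (h0 : A / 2 < q 0) : ∃ n, A ≤ q n := by
  by_contra! hlt
  have hq0 : 0 < q 0 := by linarith [hlt 0]
  obtain ⟨n, hn⟩ := pow_unbounded_of_one_lt (A / q 0) (one_lt_div_two_mul_sub h0 (hlt 0))
  rw [div_lt_iff₀ hq0] at hn
  linarith [geometric_le_of_forall_lt hrec h0 hlt n, hlt n]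

end Sequence

theorem stmt_17_general (N : ℕ) (q : ℕ → ℝ)
    (hq0l : ((N : ℝ) + 2) / 2 < q 0)
    (hrec : ∀ n : ℕ, q n < (N : ℝ) + 2 →
      q (n + 1) = (1 / 2) * (q n * ((N : ℝ) + 2) / ((N : ℝ) + 2 - q n))) :
    (∀ n : ℕ, ((N : ℝ) + 2) / 2 < q n → q n < (N : ℝ) + 2 → q n < q (n + 1)) ∧
    (∀ n : ℕ, (∀ k ≤ n + 1, q k < (N : ℝ) + 2) →
      q (n + 1) / q n < q (n + 2) / q (n + 1)) ∧
    ∃ n : ℕ, (N : ℝ) + 2 ≤ q n := by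
  have hrec' : ∀ n, q n < (N : ℝ) + 2 → q (n + 1) = bootstrapExp ((N : ℝ) + 2) (q n) := hrec
  have hA : (0 : ℝ) < N + 2 := by positivity
  refine ⟨fun n hl hu => (hrec' n hu).symm ▸ lt_bootstrapExp hl hu, fun n hlt => ?_,
    exists_le_of_half_lt hrec' hq0l⟩
  have hn := half_lt_of_forall_lt hrec' hq0l n fun k hk => hlt k (by omega)
  have hn1 := half_lt_of_forall_lt hrec' hq0l (n + 1) fun k hk => hlt k hk.le
  have hnA : q n < (N : ℝ) + 2 := hlt n n.le_succ
  rw [succ_div_eq hrec' n hnA (by linarith), succ_div_eq hrec' (n + 1) (hlt _ le_rfl) (by linarith)]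
  refine strictMonoOn_div_two_mul_sub hA hnA (hlt _ le_rfl) ?_
  rw [hrec' n hnA]
  exact lt_bootstrapExp hn hnA

/-- exponent iteration for the quadratic bootstrap.  Let `N ≥ 1`
and let `q : ℕ → ℝ` satisfy `(N+2)/2 < q 0 < N+2` and the recursion
`q_{n+1} = (1/2) qₙ (N+2)/(N+2-qₙ)` as long as `qₙ < N+2`.  Then
(i) `q_{n+1} > qₙ` whenever `(N+2)/2 < qₙ < N+2`; (ii) the ratios `q_{n+1}/qₙ` are
strictly increasing as long as the recursion is active; and (iii) some finite index
`n` has `qₙ ≥ N+2`. -/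
theorem stmt_17 (N : ℕ) (hN : 1 ≤ N) (q : ℕ → ℝ)
    (hq0l : ((N : ℝ) + 2) / 2 < q 0) (hq0u : q 0 < (N : ℝ) + 2)
    (hrec : ∀ n : ℕ, q n < (N : ℝ) + 2 →
      q (n + 1) = (1 / 2) * (q n * ((N : ℝ) + 2) / ((N : ℝ) + 2 - q n))) :
    (∀ n : ℕ, ((N : ℝ) + 2) / 2 < q n → q n < (N : ℝ) + 2 → q n < q (n + 1)) ∧
    (∀ n : ℕ, (∀ k ≤ n + 1, q k < (N : ℝ) + 2) →
      q (n + 1) / q n < q (n + 2) / q (n + 1)) ∧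
    ∃ n : ℕ, (N : ℝ) + 2 ≤ q n :=
  stmt_17_general N q hq0l hrec
end
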